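/- For the matrix transitive closure a⁺ = a^{(1)} ∪ a^{(2)} ∪ ..., where a^{(1)} = a and a^{(i)} = ∪_{j=1}^{i-1} a^{(j)} · a^{(i-j)} with matrix product defined over the min-union/⊙ structure, and a the initialization matrix a_{i,i+1} = {(A,ℓ) : (A →^ℓ wᵢ) ∈ P'} and a_{i,j} = ∅ otherwise: the pair (A,ℓ) belongs to a^{(k)}_{i,j} if and only if j - i = k, A derives w_i...w_{j-1} with minimum cost ℓ, and there is no derivation of cost less than ℓ. Moreover a^{(k)}_{i,j} = ∅ whenever j - i ≠ k. -/
import Mathlib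


/-- Weighted derivation relation for a weighted CFG given by a production relation
`P A γ c`. -/
inductive Derives {N T : Type*} (P : N → List (N ⊕ T) → ℕ → Prop) :
    List (N ⊕ T) → List (N ⊕ T) → ℕ → Prop
  | refl (w : List (N ⊕ T)) : Derives P w w 0
  | step {α β γ w : List (N ⊕ T)} {A : N} {c₁ c₂ : ℕ} :
      P A γ c₂ → Derives P (α ++ γ ++ β) w c₁ →
      Derives P (α ++ [Sum.inl A] ++ β) w (c₁ + c₂)

/-- Production relation of a weighted CNF grammar with binary rules `(A,B,C,m) ∈ R2`
(meaning `A →^m BC`) and terminal rules `(A,a,m) ∈ R1` (meaning `A →^m a`). -/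
def cnfProds {N T : Type*} (R2 : Finset (N × N × N × ℕ)) (R1 : Finset (N × T × ℕ)) :
    N → List (N ⊕ T) → ℕ → Prop := fun A rhs m =>
  (∃ B C : N, rhs = [Sum.inl B, Sum.inl C] ∧ (A, B, C, m) ∈ R2) ∨
  (∃ a : T, rhs = [Sum.inr a] ∧ (A, a, m) ∈ R1)

/-- Min-union of sets of (nonterminal, cost) pairs, modeled as `N → Option ℕ`. -/
def munion {N : Type*} (f g : N → Option ℕ) : N → Option ℕ := fun A =>
  match f A, g A with
  | none, b => b
  | some k, none => some k
  | some k₁, some k₂ => some (min k₁ k₂)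

open Classical in
/-- The product `⊙` with respect to the binary productions `R2`. -/
noncomputable def odot {N : Type*} (R2 : Finset (N × N × N × ℕ))
    (f g : N → Option ℕ) : N → Option ℕ := fun A =>
  let s : Set ℕ := {v | ∃ B C m k ℓ, (A, B, C, m) ∈ R2 ∧ f B = some k ∧ g C = some ℓ ∧
    v = k + ℓ + m}
  if s.Nonempty then some (sInf s) else none

open Classical in
/-- Indexed min-union of a family of sets of (nonterminal, cost) pairs. -/
noncomputable def bigU {N ι : Type*} (f : ι → N → Option ℕ) : N → Option ℕ := fun A =>
  if {v : ℕ | ∃ i, f i A = some v}.Nonempty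
  then some (sInf {v : ℕ | ∃ i, f i A = some v}) else none

/-- Matrix product over the min-union/⊙ structure: `c i j = ⋃ₖ (a i k) ⊙ (b k j)`. -/
noncomputable def matmul {N : Type*} {n : ℕ} (R2 : Finset (N × N × N × ℕ))
    (a b : Fin n → Fin n → N → Option ℕ) : Fin n → Fin n → N → Option ℕ :=
  fun i j => bigU (fun k => odot R2 (a i k) (b k j))

/-- The powers `a^{(k)}`: `a^{(1)} = a` and `a^{(i)} = ⋃_{j=1}^{i-1} a^{(j)} ⋅ a^{(i-j)}`. -/
noncomputable def apow {N : Type*} {n : ℕ} (R2 : Finset (N × N × N × ℕ))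
    (a : Fin n → Fin n → N → Option ℕ) : ℕ → Fin n → Fin n → N → Option ℕ
  | 0 => fun _ _ _ => none
  | 1 => a
  | (k + 2) => fun i j =>
      bigU (fun p : Fin (k + 1) =>
        matmul R2 (apow R2 a ((p : ℕ) + 1)) (apow R2 a (k + 1 - (p : ℕ))) i j)
  decreasing_by
  · omega
  · have := p.is_lt; omega

section Aux
variable {N T : Type*} {P : N → List (N ⊕ T) → ℕ → Prop}

theorem derives_cast {x y : List (N ⊕ T)} {c c' : ℕ} (h : Derives P x y c) (e : c = c') :
    Derives P x y c' := e ▸ h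

theorem derives_trans {x y z : List (N ⊕ T)} {c₁ c₂ : ℕ}
    (h₁ : Derives P x y c₁) (h₂ : Derives P y z c₂) : Derives P x z (c₁ + c₂) := by
  induction h₁ with
  | refl => simpa using h₂
  | step hp _ ih =>
    exact derives_cast (Derives.step hp (ih h₂)) (by omega)

theorem derives_append_left {x y : List (N ⊕ T)} {c : ℕ} (h : Derives P x y c)
    (z : List (N ⊕ T)) : Derives P (z ++ x) (z ++ y) c := by
  induction h with
  | refl => exact Derives.refl _
  | @step α β γ w A c₁ c₂ hp _ ih =>
    have : z ++ (α ++ [Sum.inl A] ++ β) = (z ++ α) ++ [Sum.inl A] ++ β := by simp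
    rw [this]
    have h2 : (z ++ α) ++ γ ++ β = z ++ (α ++ γ ++ β) := by simp
    exact Derives.step hp (h2 ▸ ih)

theorem derives_append_right {x y : List (N ⊕ T)} {c : ℕ} (h : Derives P x y c)
    (z : List (N ⊕ T)) : Derives P (x ++ z) (y ++ z) c := by
  induction h with
  | refl => exact Derives.refl _
  | @step α β γ w A c₁ c₂ hp _ ih =>
    have : (α ++ [Sum.inl A] ++ β) ++ z = α ++ [Sum.inl A] ++ (β ++ z) := by simp
    rw [this]
    have h2 : α ++ γ ++ (β ++ z) = (α ++ γ ++ β) ++ z := by simp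
    exact Derives.step hp (h2 ▸ ih)

theorem derives_append {x₁ y₁ x₂ y₂ : List (N ⊕ T)} {c₁ c₂ : ℕ}
    (h₁ : Derives P x₁ y₁ c₁) (h₂ : Derives P x₂ y₂ c₂) :
    Derives P (x₁ ++ x₂) (y₁ ++ y₂) (c₁ + c₂) :=
  derives_trans (derives_append_right h₁ x₂) (derives_append_left h₂ y₁)

theorem derives_terminal {u w : List (N ⊕ T)} {c : ℕ}
    (hu : ∀ s ∈ u, ∃ t, s = Sum.inr t) (h : Derives P u w c) : w = u ∧ c = 0 := by
  induction h with
  | refl => exact ⟨rfl, rfl⟩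
  | @step α β γ w A c₁ c₂ hp _ ih =>
    exfalso
    obtain ⟨t, ht⟩ := hu (Sum.inl A) (by simp)
    simp at ht

theorem derives_length_le (hP : ∀ A γ m, P A γ m → 1 ≤ γ.length)
    {x w : List (N ⊕ T)} {c : ℕ} (h : Derives P x w c) : x.length ≤ w.length := by
  induction h with
  | refl => exact le_refl _
  | @step α β γ w A c₁ c₂ hp _ ih =>
    have := hP _ _ _ hp
    simp at ih ⊢
    omega

theorem split_cases {α β x y : List (N ⊕ T)} {A : N}
    (hxy : x ++ y = α ++ [Sum.inl A] ++ β) :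
    (∃ t, x = α ++ [Sum.inl A] ++ t ∧ β = t ++ y) ∨
    (∃ t, α = x ++ t ∧ y = t ++ [Sum.inl A] ++ β) := by
  rcases List.append_eq_append_iff.1 hxy with ⟨a', h1, h2⟩ | ⟨c', h1, h2⟩
  · -- α ++ [inl A] = x ++ a', y = a' ++ β
    rcases List.append_eq_append_iff.1 h1 with ⟨a'', g1, g2⟩ | ⟨c'', g1, g2⟩
    · -- x = α ++ a'', [inl A] = a'' ++ a'
      cases a'' with
      | nil =>
        simp at g1 g2
        right; exact ⟨[], by simp [g1], by simp [h2, g2]⟩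
      | cons s t =>
        simp at g2
        obtain ⟨e1, e2, e3⟩ := g2
        subst e1; subst e2; subst e3
        left; exact ⟨[], by simp [g1], by simp [h2]⟩
    · -- α = x ++ c'', a' = c'' ++ [inl A]
      right; exact ⟨c'', g1, by simp [h2, g2]⟩
  · left; exact ⟨c', by simp [h1], h2⟩

theorem derives_split {x y w : List (N ⊕ T)} {c : ℕ}
    (h : Derives P (x ++ y) w c) :
    ∃ w₁ w₂ c₁ c₂, w = w₁ ++ w₂ ∧ c = c₁ + c₂ ∧ Derives P x w₁ c₁ ∧ Derives P y w₂ c₂ := by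
  generalize hxy : x ++ y = u at h
  induction h generalizing x y with
  | refl w => exact ⟨x, y, 0, 0, hxy.symm, rfl, Derives.refl _, Derives.refl _⟩
  | @step α β γ w A c₁ c₂ hp hd ih =>
    rcases split_cases hxy with ⟨t, hx, hb⟩ | ⟨t, hA, hy⟩
    · -- occurrence in x
      obtain ⟨w₁, w₂, d₁, d₂, hw, hc, h1, h2⟩ := ih (x := α ++ γ ++ t) (y := y) (by rw [hb]; simp)
      refine ⟨w₁, w₂, d₁ + c₂, d₂, hw, by omega, ?_, h2⟩
      rw [hx]
      exact Derives.step hp (by simpa using h1)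
    · obtain ⟨w₁, w₂, d₁, d₂, hw, hc, h1, h2⟩ := ih (x := x) (y := t ++ γ ++ β) (by rw [hA]; simp)
      refine ⟨w₁, w₂, d₁, d₂ + c₂, hw, by omega, h1, ?_⟩
      rw [hy]
      exact Derives.step hp (by simpa using h2)

end Aux

section Aux2
variable {N T : Type*} {R2 : Finset (N × N × N × ℕ)} {R1 : Finset (N × T × ℕ)}

theorem cnf_rhs_len : ∀ A γ m, cnfProds R2 R1 A γ m → 1 ≤ γ.length := by
  rintro A γ m (⟨B, C, rfl, _⟩ | ⟨t, rfl, _⟩) <;> simp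

theorem derives_map_inr {u : List T} {w : List (N ⊕ T)} {c : ℕ}
    (h : Derives (cnfProds R2 R1) (u.map Sum.inr) w c) : w = u.map Sum.inr ∧ c = 0 :=
  derives_terminal (by simp) h

theorem single_eq_append {x y : List (N ⊕ T)} {A : N}
    (h : x ++ [Sum.inl A] ++ y = ([Sum.inl A'] : List (N ⊕ T))) :
    x = [] ∧ y = [] ∧ A = A' := by
  have hl := congrArg List.length h
  simp at hl
  have h1 : x = [] := List.eq_nil_of_length_eq_zero (by omega)
  have h2 : y = [] := List.eq_nil_of_length_eq_zero (by omega)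
  subst h1; subst h2
  simp at h
  exact ⟨rfl, rfl, h⟩

theorem derives_single_terminal {A : N} {t : T} {c : ℕ} :
    Derives (cnfProds R2 R1) [Sum.inl A] [Sum.inr t] c ↔ (A, t, c) ∈ R1 := by
  constructor
  · intro h
    generalize hx : ([Sum.inl A] : List (N ⊕ T)) = x at h
    generalize hw : ([Sum.inr t] : List (N ⊕ T)) = w' at h
    cases h with
    | refl => rw [← hw] at hx; simp at hx
    | @step α β γ w' A' c₁ c₂ hp hd =>
      obtain ⟨rfl, rfl, rfl⟩ := single_eq_append hx.symm
      rcases hp with ⟨B, C, rfl, hr⟩ | ⟨a, rfl, hr⟩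
      · exfalso
        simp at hd
        have : (2 : ℕ) ≤ ([Sum.inr t] : List (N ⊕ T)).length :=
          hw ▸ derives_length_le cnf_rhs_len (show Derives (cnfProds R2 R1)
            ([Sum.inl B, Sum.inl C]) w' c₁ from hd)
        simp at this
      · simp at hd
        obtain ⟨h1, h2⟩ := derives_map_inr (u := [a]) (by simpa using hd)
        rw [← hw] at h1
        simp at h1
        subst h1; subst h2
        simpa using hr
  · intro hr
    have h0 : Derives (cnfProds R2 R1) ([] ++ [Sum.inr t] ++ []) [Sum.inr t] 0 := by
      simpa using Derives.refl (P := cnfProds R2 R1) [Sum.inr t]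
    have := Derives.step (α := []) (β := []) (Or.inr ⟨t, rfl, hr⟩) h0
    simpa using this

theorem derives_binary_iff {A : N} {u : List T} (hu : 2 ≤ u.length) {c : ℕ} :
    Derives (cnfProds R2 R1) [Sum.inl A] (u.map Sum.inr) c ↔
    ∃ B C m u₁ u₂ c₁ c₂, (A, B, C, m) ∈ R2 ∧ u = u₁ ++ u₂ ∧ u₁ ≠ [] ∧ u₂ ≠ [] ∧
      Derives (cnfProds R2 R1) [Sum.inl B] (u₁.map Sum.inr) c₁ ∧
      Derives (cnfProds R2 R1) [Sum.inl C] (u₂.map Sum.inr) c₂ ∧ c = c₁ + c₂ + m := by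
  constructor
  · intro h
    generalize hx : ([Sum.inl A] : List (N ⊕ T)) = x at h
    generalize hw : u.map Sum.inr = w' at h
    cases h with
    | refl =>
      rw [← hw] at hx
      exfalso
      have := congrArg List.length hx
      simp at this
      omega
    | @step α β γ w' A' c₁ c₂ hp hd =>
      obtain ⟨rfl, rfl, rfl⟩ := single_eq_append hx.symm
      rcases hp with ⟨B, C, rfl, hr⟩ | ⟨a, rfl, hr⟩
      · simp at hd
        have hd' : Derives (cnfProds R2 R1) ([Sum.inl B] ++ [Sum.inl C]) w' c₁ := by
          simpa using hd
        obtain ⟨w₁, w₂, d₁, d₂, hsplit, hsum, h1, h2⟩ := derives_split hd'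
        rw [← hw] at hsplit
        obtain ⟨u₁, u₂, rfl, hw1, hw2⟩ := List.map_eq_append_iff.1 hsplit
        refine ⟨B, C, c₂, u₁, u₂, d₁, d₂, hr, rfl, ?_, ?_, hw1 ▸ h1, hw2 ▸ h2, by omega⟩
        · have := derives_length_le cnf_rhs_len h1
          rw [← hw1] at this
          simp at this
          intro hnil; rw [hnil] at this; simp at this
        · have := derives_length_le cnf_rhs_len h2
          rw [← hw2] at this
          simp at this
          intro hnil; rw [hnil] at this; simp at this
      · exfalso
        simp at hd
        obtain ⟨h1, h2⟩ := derives_map_inr (u := [a]) (by simpa using hd)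
        rw [← hw] at h1
        have := congrArg List.length h1
        simp at this
        omega
  · rintro ⟨B, C, m, u₁, u₂, c₁, c₂, hr, rfl, h1n, h2n, h1, h2, rfl⟩
    have hstep : Derives (cnfProds R2 R1) [Sum.inl A] [Sum.inl B, Sum.inl C] m := by
      have h0 : Derives (cnfProds R2 R1) ([] ++ [Sum.inl B, Sum.inl C] ++ [])
          [Sum.inl B, Sum.inl C] 0 := by
        simpa using Derives.refl (P := cnfProds R2 R1) [Sum.inl B, Sum.inl C]
      have := Derives.step (α := []) (β := []) (Or.inl ⟨B, C, rfl, hr⟩) h0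
      simpa using this
    have hcat : Derives (cnfProds R2 R1) ([Sum.inl B] ++ [Sum.inl C])
        (u₁.map Sum.inr ++ u₂.map Sum.inr) (c₁ + c₂) := derives_append h1 h2
    have hfin := derives_trans hstep (by simpa using hcat)
    rw [List.map_append]
    exact derives_cast hfin (by omega)

end Aux2

section Aux3
variable {N : Type*}

def IsMinOf (o : Option ℕ) (S : Set ℕ) : Prop :=
  ∀ ℓ : ℕ, o = some ℓ ↔ ℓ ∈ S ∧ ∀ v ∈ S, ℓ ≤ v

theorem IsMinOf.some_sInf {o : Option ℕ} {S : Set ℕ} (h : IsMinOf o S)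
    (hS : S.Nonempty) : o = some (sInf S) :=
  (h _).2 ⟨Nat.sInf_mem hS, fun _ hv => Nat.sInf_le hv⟩

theorem IsMinOf.none_of_empty {o : Option ℕ} {S : Set ℕ} (h : IsMinOf o S)
    (hS : S = ∅) : o = none := by
  cases o with
  | none => rfl
  | some ℓ => have := ((h ℓ).1 rfl).1; rw [hS] at this; exact absurd this (by simp)

theorem IsMinOf.congr_cofinal {o : Option ℕ} {S T : Set ℕ} (h : IsMinOf o S)
    (hST : S ⊆ T) (hTS : ∀ v ∈ T, ∃ u ∈ S, u ≤ v) : IsMinOf o T := by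
  intro ℓ
  rw [h ℓ]
  constructor
  · rintro ⟨hm, hlb⟩
    exact ⟨hST hm, fun v hv => by obtain ⟨u, hu, huv⟩ := hTS v hv; exact (hlb u hu).trans huv⟩
  · rintro ⟨hm, hlb⟩
    obtain ⟨u, hu, huℓ⟩ := hTS ℓ hm
    have : ℓ = u := le_antisymm (hlb u (hST hu)) huℓ |>.symm ▸ rfl
    have hℓu : ℓ ≤ u := hlb u (hST hu)
    have : ℓ = u := le_antisymm hℓu huℓ
    subst this
    exact ⟨hu, fun v hv => hlb v (hST hv)⟩

theorem odot_isMinOf (R2 : Finset (N × N × N × ℕ)) (f g : N → Option ℕ) (A : N) :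
    IsMinOf (odot R2 f g A)
      {v | ∃ B C m k ℓ, (A, B, C, m) ∈ R2 ∧ f B = some k ∧ g C = some ℓ ∧ v = k + ℓ + m} := by
  intro ℓ
  unfold odot
  dsimp only
  set s : Set ℕ := {v | ∃ B C m k ℓ, (A, B, C, m) ∈ R2 ∧ f B = some k ∧ g C = some ℓ ∧
    v = k + ℓ + m} with hs
  split_ifs with hne
  · simp only [Option.some_inj]
    constructor
    · rintro rfl
      exact ⟨Nat.sInf_mem hne, fun v hv => Nat.sInf_le hv⟩
    · rintro ⟨hm, hlb⟩
      exact le_antisymm (Nat.sInf_le hm) (le_csInf ⟨ℓ, hm⟩ hlb)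
  · simp only [(by simp : (none : Option ℕ) = some ℓ ↔ False), false_iff]
    rintro ⟨hm, -⟩
    exact hne ⟨ℓ, hm⟩

theorem bigU_raw_isMinOf {ι : Type*} (f : ι → N → Option ℕ) (A : N) :
    IsMinOf (bigU f A) {v | ∃ i, f i A = some v} := by
  intro ℓ
  unfold bigU
  split_ifs with hne
  · simp only [Option.some_inj]
    constructor
    · rintro rfl
      exact ⟨Nat.sInf_mem hne, fun v hv => Nat.sInf_le hv⟩
    · rintro ⟨hm, hlb⟩
      exact le_antisymm (Nat.sInf_le hm) (le_csInf ⟨ℓ, hm⟩ hlb)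
  · simp only [(by simp : (none : Option ℕ) = some ℓ ↔ False), false_iff]
    rintro ⟨hm, -⟩
    exact hne ⟨ℓ, hm⟩

theorem bigU_isMinOf {ι : Type*} {f : ι → N → Option ℕ} {A : N} {S : ι → Set ℕ}
    (h : ∀ i, IsMinOf (f i A) (S i)) : IsMinOf (bigU f A) (⋃ i, S i) := by
  refine (bigU_raw_isMinOf f A).congr_cofinal ?_ ?_
  · rintro v ⟨i, hv⟩
    exact Set.mem_iUnion.2 ⟨i, ((h i _).1 hv).1⟩
  · intro v hv
    obtain ⟨i, hvi⟩ := Set.mem_iUnion.1 hv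
    have hne : (S i).Nonempty := ⟨v, hvi⟩
    exact ⟨sInf (S i), ⟨i, (h i).some_sInf hne⟩, Nat.sInf_le hvi⟩

end Aux3

theorem apow_isMinOf {N T : Type*} {n : ℕ}
    (R2 : Finset (N × N × N × ℕ)) (R1 : Finset (N × T × ℕ)) (w : Fin n → T)
    (a : Fin (n + 1) → Fin (n + 1) → N → Option ℕ)
    (ha : ∀ (i j : Fin (n + 1)) (A : N) (ℓ : ℕ),
      a i j A = some ℓ ↔ ((j : ℕ) = (i : ℕ) + 1 ∧ ∃ h : (i : ℕ) < n,
        (A, w ⟨i, h⟩, ℓ) ∈ R1 ∧ ∀ ℓ', (A, w ⟨i, h⟩, ℓ') ∈ R1 → ℓ ≤ ℓ')) :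
    ∀ (k : ℕ), 1 ≤ k → ∀ (i j : Fin (n + 1)) (A : N),
      IsMinOf (apow R2 a k i j A)
        {c | (j : ℕ) - (i : ℕ) = k ∧ (i : ℕ) < (j : ℕ) ∧
          Derives (cnfProds R2 R1) [Sum.inl A]
            (((List.ofFn w).drop i |>.take ((j : ℕ) - (i : ℕ))).map Sum.inr) c} := by
  intro k
  induction k using Nat.strong_induction_on with
  | _ k ih =>
  intro hk i j A
  obtain _ | k := k
  · omega
  obtain _ | k' := k
  · -- base case k = 1
    have e1 : apow R2 a 1 = a := by rw [apow]
    rw [e1]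
    intro ℓ
    rw [ha i j A ℓ]
    have hjn : (j : ℕ) ≤ n := by have := j.isLt; omega
    constructor
    · rintro ⟨hj, hi, hr, hmin⟩
      have hstr : ((List.ofFn w).drop (i : ℕ)).take ((j : ℕ) - (i : ℕ)) = [w ⟨i, hi⟩] := by
        rw [show (j : ℕ) - (i : ℕ) = 1 by omega,
          List.drop_eq_getElem_cons (by simp [hi])]
        simp
      refine ⟨⟨by omega, by omega, ?_⟩, ?_⟩
      · rw [hstr]
        simpa using derives_single_terminal.2 hr
      · rintro q ⟨-, -, hq⟩
        rw [hstr] at hq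
        exact hmin q (derives_single_terminal.1 (by simpa using hq))
    · rintro ⟨⟨h1, h2, hd⟩, hlb⟩
      have hin : (i : ℕ) < n := by omega
      have hstr : ((List.ofFn w).drop (i : ℕ)).take ((j : ℕ) - (i : ℕ)) = [w ⟨i, hin⟩] := by
        rw [show (j : ℕ) - (i : ℕ) = 1 by omega,
          List.drop_eq_getElem_cons (by simp [hin])]
        simp
      rw [hstr] at hd
      refine ⟨by omega, hin, derives_single_terminal.1 (by simpa using hd), ?_⟩
      intro ℓ' hr'
      exact hlb ℓ' ⟨by omega, h2, by
        rw [hstr]; simpa using derives_single_terminal.2 hr'⟩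
  · -- inductive case k = k' + 2
    set L := List.ofFn w with hL
    have hjn : (j : ℕ) ≤ n := by have := j.isLt; omega
    have e : apow R2 a (k' + 2) i j = bigU (fun p : Fin (k' + 1) =>
        matmul R2 (apow R2 a ((p : ℕ) + 1)) (apow R2 a (k' + 1 - (p : ℕ))) i j) := by
      rw [apow]
    have htot : IsMinOf (apow R2 a (k' + 2) i j A)
        (⋃ p : Fin (k' + 1), ⋃ mid : Fin (n + 1),
          {v | ∃ B C m kb lc, (A, B, C, m) ∈ R2 ∧
            apow R2 a ((p : ℕ) + 1) i mid B = some kb ∧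
            apow R2 a (k' + 1 - (p : ℕ)) mid j C = some lc ∧ v = kb + lc + m}) := by
      rw [e]
      refine bigU_isMinOf (fun p => ?_)
      unfold matmul
      exact bigU_isMinOf (fun mid => odot_isMinOf R2 _ _ A)
    refine htot.congr_cofinal ?_ ?_
    · -- subset direction
      rintro v hv
      simp only [Set.mem_iUnion, Set.mem_setOf_eq] at hv
      obtain ⟨p, mid, B, C, m, kb, lc, hr, hkb, hlc, rfl⟩ := hv
      have hplt := p.isLt
      have hmlt := mid.isLt
      obtain ⟨⟨eB, ltB, dB⟩, -⟩ :=
        ((ih ((p : ℕ) + 1) (by omega) (by omega) i mid B) kb).1 hkb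
      obtain ⟨⟨eC, ltC, dC⟩, -⟩ :=
        ((ih (k' + 1 - (p : ℕ)) (by omega) (by omega) mid j C) lc).1 hlc
      have hji : (j : ℕ) - (i : ℕ) = k' + 2 := by omega
      have hij : (i : ℕ) < (j : ℕ) := by omega
      refine ⟨hji, hij, ?_⟩
      have hu2 : 2 ≤ ((L.drop (i : ℕ)).take ((j : ℕ) - (i : ℕ))).length := by
        simp [hL]; omega
      refine (derives_binary_iff hu2).2
        ⟨B, C, m, (L.drop (i : ℕ)).take ((mid : ℕ) - (i : ℕ)),
          (L.drop (mid : ℕ)).take ((j : ℕ) - (mid : ℕ)), kb, lc, hr, ?_, ?_, ?_, dB, dC, rfl⟩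
      · rw [show (j : ℕ) - (i : ℕ) = ((mid : ℕ) - (i : ℕ)) + ((j : ℕ) - (mid : ℕ)) by omega,
          List.take_add, List.drop_drop,
          show (i : ℕ) + ((mid : ℕ) - (i : ℕ)) = (mid : ℕ) by omega]
      · intro hnil
        have := congrArg List.length hnil
        simp [hL] at this
        omega
      · intro hnil
        have := congrArg List.length hnil
        simp [hL] at this
        omega
    · -- cofinality direction
      rintro v ⟨hji, hij, hd⟩
      have hu2 : 2 ≤ ((L.drop (i : ℕ)).take ((j : ℕ) - (i : ℕ))).length := by
        simp [hL]; omega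
      obtain ⟨B, C, m, u₁, u₂, c₁, c₂, hr, hsplit, hn1, hn2, d1, d2, rfl⟩ :=
        (derives_binary_iff hu2).1 hd
      have hlu : u₁.length + u₂.length = k' + 2 := by
        have := congrArg List.length hsplit
        simp [hL] at this
        omega
      have h1p : 1 ≤ u₁.length := List.length_pos_iff.2 hn1
      have h2p : 1 ≤ u₂.length := List.length_pos_iff.2 hn2
      set mid : Fin (n + 1) := ⟨(i : ℕ) + u₁.length, by omega⟩ with hmid
      set p : Fin (k' + 1) := ⟨u₁.length - 1, by omega⟩ with hp
      have hmidv : (mid : ℕ) = (i : ℕ) + u₁.length := rfl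
      have hpv : (p : ℕ) = u₁.length - 1 := rfl
      have hu₁ : u₁ = (L.drop (i : ℕ)).take ((mid : ℕ) - (i : ℕ)) := by
        have h0 : u₁ = ((L.drop (i : ℕ)).take ((j : ℕ) - (i : ℕ))).take u₁.length := by
          rw [hsplit]; simp
        rw [h0, List.take_take]
        congr 1
        omega
      have hu₂ : u₂ = (L.drop (mid : ℕ)).take ((j : ℕ) - (mid : ℕ)) := by
        have h0 : u₂ = ((L.drop (i : ℕ)).take ((j : ℕ) - (i : ℕ))).drop u₁.length := by
          rw [hsplit]; simp
        rw [h0, List.drop_take, List.drop_drop,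
          show (i : ℕ) + u₁.length = (mid : ℕ) from rfl,
          show (j : ℕ) - (i : ℕ) - u₁.length = (j : ℕ) - (mid : ℕ) by omega]
      rw [hu₁] at d1
      rw [hu₂] at d2
      have hminB := ih ((p : ℕ) + 1) (by omega) (by omega) i mid B
      have hminC := ih (k' + 1 - (p : ℕ)) (by omega) (by omega) mid j C
      set DB : Set ℕ := {c | (mid : ℕ) - (i : ℕ) = (p : ℕ) + 1 ∧ (i : ℕ) < (mid : ℕ) ∧
          Derives (cnfProds R2 R1) [Sum.inl B]
            ((L.drop (i : ℕ) |>.take ((mid : ℕ) - (i : ℕ))).map Sum.inr) c} with hDB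
      set DC : Set ℕ := {c | (j : ℕ) - (mid : ℕ) = k' + 1 - (p : ℕ) ∧ (mid : ℕ) < (j : ℕ) ∧
          Derives (cnfProds R2 R1) [Sum.inl C]
            ((L.drop (mid : ℕ) |>.take ((j : ℕ) - (mid : ℕ))).map Sum.inr) c} with hDC
      have hBmem : c₁ ∈ DB := ⟨by omega, by omega, d1⟩
      have hCmem : c₂ ∈ DC := ⟨by omega, by omega, d2⟩
      refine ⟨sInf DB + sInf DC + m, ?_, ?_⟩
      · simp only [Set.mem_iUnion, Set.mem_setOf_eq]
        exact ⟨p, mid, B, C, m, _, _, hr, hminB.some_sInf ⟨c₁, hBmem⟩,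
          hminC.some_sInf ⟨c₂, hCmem⟩, rfl⟩
      · have := Nat.sInf_le hBmem
        have := Nat.sInf_le hCmem
        omega

/-- For the initialization matrix `a_{i,i+1} = {(A,ℓ) : (A →^ℓ wᵢ) ∈ P'}` (keeping the
minimum cost per nonterminal) and `a_{i,j} = ∅` otherwise, the pair `(A,ℓ)` belongs to
`a^{(k)}_{i,j}` iff `j - i = k` and `ℓ` is the minimum cost of a derivation of
`w_i ⋯ w_{j-1}` from `A`; moreover `a^{(k)}_{i,j} = ∅` whenever `j - i ≠ k`. -/
theorem apow_characterization {N T : Type*} {n : ℕ}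
    (R2 : Finset (N × N × N × ℕ)) (R1 : Finset (N × T × ℕ)) (w : Fin n → T)
    (a : Fin (n + 1) → Fin (n + 1) → N → Option ℕ)
    (ha : ∀ (i j : Fin (n + 1)) (A : N) (ℓ : ℕ),
      a i j A = some ℓ ↔ ((j : ℕ) = (i : ℕ) + 1 ∧ ∃ h : (i : ℕ) < n,
        (A, w ⟨i, h⟩, ℓ) ∈ R1 ∧ ∀ ℓ', (A, w ⟨i, h⟩, ℓ') ∈ R1 → ℓ ≤ ℓ')) :
    ∀ (k : ℕ), 1 ≤ k → ∀ (i j : Fin (n + 1)) (A : N),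
      (∀ ℓ : ℕ, apow R2 a k i j A = some ℓ ↔
        ((j : ℕ) - (i : ℕ) = k ∧ (i : ℕ) < (j : ℕ) ∧
          Derives (cnfProds R2 R1) [Sum.inl A]
            (((List.ofFn w).drop i |>.take ((j : ℕ) - (i : ℕ))).map Sum.inr) ℓ ∧
          ∀ q : ℕ, Derives (cnfProds R2 R1) [Sum.inl A]
            (((List.ofFn w).drop i |>.take ((j : ℕ) - (i : ℕ))).map Sum.inr) q → ℓ ≤ q)) ∧
      ((j : ℕ) - (i : ℕ) ≠ k → apow R2 a k i j A = none) := by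
  intro k hk i j A
  have H := apow_isMinOf R2 R1 w a ha k hk i j A
  constructor
  · intro ℓ
    rw [H ℓ]
    constructor
    · rintro ⟨⟨h1, h2, hd⟩, hlb⟩
      exact ⟨h1, h2, hd, fun q hq => hlb q ⟨h1, h2, hq⟩⟩
    · rintro ⟨h1, h2, hd, hlb⟩
      exact ⟨⟨h1, h2, hd⟩, fun v ⟨_, _, hv⟩ => hlb v hv⟩
  · intro hne
    refine H.none_of_empty ?_
    ext c
    simp only [Set.mem_setOf_eq, Set.mem_empty_iff_false, iff_false]
    rintro ⟨h1, -, -⟩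
    exact hne h1
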